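/- Let F be a field and n ≥ 5. Then D_n(F) is a maximal i-reversible subring of T_n(F): D_n(F) is i-reversible, and every subring of T_n(F) strictly containing D_n(F) is not i-reversible. -/

import Mathlib

/-- A ring is *i-reversible* if whenever `a * b` is a non-zero idempotent, `b * a` is an
idempotent. -/
def IsIReversible (S : Type*) [Ring S] : Prop :=
  ∀ a b : S, IsIdempotentElem (a * b) → a * b ≠ 0 → IsIdempotentElem (b * a)

/-- A ring is *reversible* if `a * b = 0` implies `b * a = 0`. -/
def IsReversible (S : Type*) [Ring S] : Prop :=
  ∀ a b : S, a * b = 0 → b * a = 0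

/-- A ring has only trivial idempotents if its only idempotents are `0` and `1`. -/
def HasOnlyTrivialIdempotents (S : Type*) [Ring S] : Prop :=
  ∀ e : S, IsIdempotentElem e → e = 0 ∨ e = 1

/-- Upper triangular predicate for square matrices. -/
def Matrix.IsUpperTri {n : ℕ} {R : Type*} [Zero R] (A : Matrix (Fin n) (Fin n) R) : Prop :=
  ∀ ⦃i j : Fin n⦄, j < i → A i j = 0

lemma Matrix.IsUpperTri.mul {n : ℕ} {R : Type*} [Ring R]
    {A B : Matrix (Fin n) (Fin n) R} (hA : A.IsUpperTri) (hB : B.IsUpperTri) :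
    (A * B).IsUpperTri := by
  intro i j h
  rw [Matrix.mul_apply]
  refine Finset.sum_eq_zero fun k _ => ?_
  rcases lt_or_ge k i with hk | hk
  · rw [hA hk, zero_mul]
  · rw [hB (lt_of_lt_of_le h hk), mul_zero]

/-- The ring `T_n(R)` of upper triangular `n × n` matrices, as a subring of the matrix ring. -/
def triangularRing (n : ℕ) (R : Type*) [Ring R] :
    Subring (Matrix (Fin n) (Fin n) R) where
  carrier := {A | A.IsUpperTri}
  mul_mem' ha hb := ha.mul hb
  one_mem' := fun i j h => by simp [Matrix.one_apply, (ne_of_lt h).symm]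
  add_mem' ha hb := fun i j h => by simp [Matrix.add_apply, ha h, hb h]
  zero_mem' := fun i j h => rfl
  neg_mem' ha := fun i j h => by simp [ha h]

lemma diag_mul_upperTri {n : ℕ} {R : Type*} [Ring R]
    {A B : Matrix (Fin n) (Fin n) R} (hA : A.IsUpperTri)
    (hB : B.IsUpperTri) (i : Fin n) : (A * B) i i = A i i * B i i := by
  rw [Matrix.mul_apply]
  refine Finset.sum_eq_single i (fun k _ hk => ?_) (by simp)
  rcases lt_or_gt_of_ne hk with h | h
  · rw [hA h, zero_mul]
  · rw [hB h, mul_zero]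

/-- The ring `D_n(R)` of upper triangular `n × n` matrices with constant diagonal. -/
def constDiagRing (n : ℕ) (R : Type*) [Ring R] :
    Subring (Matrix (Fin n) (Fin n) R) where
  carrier := {A | A.IsUpperTri ∧ ∀ i j : Fin n, A i i = A j j}
  mul_mem' := by
    rintro A B ⟨hA, hA'⟩ ⟨hB, hB'⟩
    refine ⟨hA.mul hB, fun i j => ?_⟩
    rw [diag_mul_upperTri hA hB, diag_mul_upperTri hA hB, hA' i j, hB' i j]
  one_mem' := ⟨fun i j h => by simp [Matrix.one_apply, (ne_of_lt h).symm], by simp⟩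
  add_mem' := by
    rintro A B ⟨hA, hA'⟩ ⟨hB, hB'⟩
    exact ⟨fun i j h => by simp [Matrix.add_apply, hA h, hB h],
      fun i j => by simp [Matrix.add_apply, hA' i j, hB' i j]⟩
  zero_mem' := ⟨fun i j h => rfl, by simp⟩
  neg_mem' := by
    rintro A ⟨hA, hA'⟩
    exact ⟨fun i j h => by simp [hA h], fun i j => by simp [hA' i j]⟩

/-!
An element of `D_n(F)` is a scalar plus a nilpotent, so its only idempotents are `0` and `1`;
since matrix rings are Dedekind-finite, `a * b = 1` forces `b * a = 1`, and `D_n(F)` is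
i-reversible. A subring `S` with `D_n(F) < S ≤ T_n(F)` contains a matrix with non-constant
diagonal; subtracting its strictly upper part (which lies in `D_n(F)`) and interpolating
polynomially gives a diagonal 0/1 idempotent `e ∉ {0, 1}` in `S`. As `n ≥ 5`, `e` or `1 - e`
vanishes at three positions `p < q < r`; for that idempotent `e`, the elements `a = e + E_qr`
and `b = e + E_pq` give `a * b = e` but `b * a = e + E_pr`, which is not idempotent.
-/

open Matrix Finset

namespace Matrix

variable {ι R : Type*} [DecidableEq ι]

theorem diagonal_mul_single [Fintype ι] [NonUnitalNonAssocSemiring R] (d : ι → R) (i j : ι)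
    (c : R) : diagonal d * single i j c = single i j (d i * c) := by
  ext p q
  by_cases hp : i = p <;> simp [diagonal_mul, single_apply, hp]

theorem single_mul_diagonal [Fintype ι] [NonUnitalNonAssocSemiring R] (d : ι → R) (i j : ι)
    (c : R) : single i j c * diagonal d = single i j (c * d j) := by
  ext p q
  by_cases hq : j = q <;> simp [mul_diagonal, single_apply, hq]

theorem IsUpperTriangular.isNilpotent_of_diag_eq_zero [Fintype ι] [LinearOrder ι] [CommRing R]
    {M : Matrix ι ι R} (hM : M.IsUpperTriangular) (hd : ∀ i, M i i = 0) : IsNilpotent M :=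
  ⟨Fintype.card ι, by simpa [charpoly_of_isUpperTriangular M hM, hd] using M.aeval_self_charpoly⟩

theorem IsUpperTri.isUpperTriangular {n : ℕ} [Zero R] {A : Matrix (Fin n) (Fin n) R}
    (hA : A.IsUpperTri) : A.IsUpperTriangular :=
  fun _ _ hij => hA hij

end Matrix

section ConstDiag

variable {n : ℕ}

theorem diagonal_const_mem_constDiagRing {R : Type*} [Ring R] (c : R) :
    diagonal (fun _ => c) ∈ constDiagRing n R :=
  ⟨fun _ _ hij => diagonal_apply_ne _ hij.ne', fun _ _ => by simp⟩

theorem single_mem_constDiagRing {R : Type*} [Ring R] {i j : Fin n} (hij : i < j) (c : R) :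
    single i j c ∈ constDiagRing n R := by
  have hdiag (p : Fin n) : ¬(i = p ∧ j = p) := fun h => hij.ne (h.1.trans h.2.symm)
  refine ⟨fun p q hqp => single_apply_of_ne _ _ _ _ _ ?_, fun p q => ?_⟩
  · rintro ⟨rfl, rfl⟩
    exact hqp.not_gt hij
  · rw [single_apply_of_ne _ _ _ _ _ (hdiag p), single_apply_of_ne _ _ _ _ _ (hdiag q)]

theorem constDiagRing_hasOnlyTrivialIdempotents {R : Type*} [CommRing R] [IsDomain R] :
    HasOnlyTrivialIdempotents (constDiagRing n R) := by
  intro e he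
  obtain ⟨hT, hconst⟩ := e.2
  have he' : IsIdempotentElem (e : Matrix (Fin n) (Fin n) R) := congrArg Subtype.val he
  by_cases hzero : ∀ i, (e : Matrix (Fin n) (Fin n) R) i i = 0
  · exact .inl <| Subtype.ext <|
      he'.eq_zero_of_isNilpotent (hT.isUpperTriangular.isNilpotent_of_diag_eq_zero hzero)
  · obtain ⟨i, hi⟩ := not_forall.mp hzero
    have hi1 : (e : Matrix (Fin n) (Fin n) R) i i = 1 := by
      refine (IsIdempotentElem.iff_eq_zero_or_one.mp ?_).resolve_left hi
      rw [IsIdempotentElem, ← diag_mul_upperTri hT hT, he'.eq]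
    have hT' : (1 - (e : Matrix (Fin n) (Fin n) R)).IsUpperTriangular :=
      blockTriangular_one.sub hT.isUpperTriangular
    have hsub : 1 - (e : Matrix (Fin n) (Fin n) R) = 0 :=
      he'.one_sub.eq_zero_of_isNilpotent <| hT'.isNilpotent_of_diag_eq_zero fun j => by
        rw [Matrix.sub_apply, one_apply_eq, hconst j i, hi1, sub_self]
    exact .inr <| Subtype.ext (sub_eq_zero.mp hsub).symm

theorem isIReversible_of_hasOnlyTrivialIdempotents {S : Type*} [Ring S]
    [IsDedekindFiniteMonoid S] (h : HasOnlyTrivialIdempotents S) : IsIReversible S :=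
  fun _ _ hab hab0 => mul_eq_one_comm.mp ((h _ hab).resolve_left hab0) ▸ .one

theorem constDiagRing_isIReversible {R : Type*} [CommRing R] [IsDomain R] :
    IsIReversible (constDiagRing n R) :=
  isIReversible_of_hasOnlyTrivialIdempotents constDiagRing_hasOnlyTrivialIdempotents

end ConstDiag

theorem not_isIReversible_of_orthogonal {S : Type*} [Ring S] {e x y : S}
    (he : IsIdempotentElem e) (he0 : e ≠ 0) (hex : e * x = 0) (hxe : x * e = 0)
    (hey : e * y = 0) (hye : y * e = 0) (hxy : x * y = 0) (hyx : y * x ≠ 0) :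
    ¬ IsIReversible S := by
  intro hrev
  have hab : (e + x) * (e + y) = e := by
    simp only [add_mul, mul_add, he.eq, hey, hxe, hxy, add_zero]
  have hba : (e + y) * (e + x) = e + y * x := by
    simp only [add_mul, mul_add, he.eq, hye, hex, add_zero, zero_add]
  have h1 : e * (y * x) = 0 := by rw [← mul_assoc, hey, zero_mul]
  have h2 : y * x * e = 0 := by rw [mul_assoc, hxe, mul_zero]
  have h3 : y * x * (y * x) = 0 := by rw [mul_assoc, ← mul_assoc x, hxy, zero_mul, mul_zero]
  have hsq : (e + y * x) * (e + y * x) = e := by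
    simp only [add_mul, mul_add, he.eq, h1, h2, h3, add_zero]
  have hidem := hrev (e + x) (e + y) (by rwa [hab]) (by rwa [hab])
  rw [hba, IsIdempotentElem, hsq] at hidem
  exact hyx (by simpa using hidem)

theorem Subring.ite_eq_mem {ι F : Type*} [Fintype ι] [Field F] [DecidableEq F]
    (T : Subring (ι → F)) (hC : ∀ c : F, (fun _ => c) ∈ T) {d : ι → F} (hd : d ∈ T) (t : F) :
    (fun i => if d i = t then 1 else 0) ∈ T := by
  -- Lagrange interpolation: the polynomial vanishing on the other values of `d`, normalized at `t`.
  set V := (univ.image d).erase t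
  have hinterp : (fun i => if d i = t then 1 else 0) =
      ∏ v ∈ V, (fun _ => (t - v)⁻¹) * (d - fun _ => v) := by
    funext i
    rw [Finset.prod_apply]
    split_ifs with hi
    · refine (prod_eq_one fun v hv => ?_).symm
      simp [hi, inv_mul_cancel₀ (sub_ne_zero.mpr (ne_of_mem_erase hv).symm)]
    · exact (prod_eq_zero (mem_erase.mpr ⟨hi, mem_image_of_mem d (mem_univ i)⟩) (by simp)).symm
  rw [hinterp]
  exact T.prod_mem fun v _ => T.mul_mem (hC _) (T.sub_mem hd (hC v))

theorem Finset.exists_lt_lt_of_two_lt_card {α : Type*} [LinearOrder α] {s : Finset α}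
    (hs : 2 < s.card) : ∃ p ∈ s, ∃ q ∈ s, ∃ r ∈ s, p < q ∧ q < r := by
  let f := s.orderEmbOfFin rfl
  exact ⟨f ⟨0, by omega⟩, s.orderEmbOfFin_mem rfl _, f ⟨1, hs.trans' one_lt_two⟩,
    s.orderEmbOfFin_mem rfl _, f ⟨2, hs⟩, s.orderEmbOfFin_mem rfl _,
    f.strictMono (by simp [Fin.lt_def]), f.strictMono (by simp [Fin.lt_def])⟩

section Extension

variable {n : ℕ}

theorem diagonal_diag_mem {R : Type*} [Ring R] {S : Subring (Matrix (Fin n) (Fin n) R)}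
    (hD : constDiagRing n R ≤ S) {A : Matrix (Fin n) (Fin n) R} (hA : A ∈ S)
    (hAT : A.IsUpperTri) : diagonal A.diag ∈ S := by
  have hstrict : A - diagonal A.diag ∈ constDiagRing n R :=
    ⟨fun i j hij => by simp [hAT hij, hij.ne'], fun i j => by simp⟩
  simpa using S.sub_mem hA (hD hstrict)

theorem diagonal_ite_diag_eq_mem {F : Type*} [Field F] [DecidableEq F]
    {S : Subring (Matrix (Fin n) (Fin n) F)} (hD : constDiagRing n F ≤ S)
    {A : Matrix (Fin n) (Fin n) F} (hA : A ∈ S) (hAT : A.IsUpperTri) (t : F) :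
    diagonal (fun i => if A i i = t then 1 else 0) ∈ S :=
  (S.comap (diagonalRingHom (Fin n) F)).ite_eq_mem
    (fun c => hD (diagonal_const_mem_constDiagRing c)) (diagonal_diag_mem hD hA hAT) t

theorem not_isIReversible_of_diagonal_indicator_mem_of_two_lt_card {R : Type*} [Ring R]
    [Nontrivial R] {S : Subring (Matrix (Fin n) (Fin n) R)} (hD : constDiagRing n R ≤ S)
    {s : Finset (Fin n)} (hs : diagonal (fun i => if i ∈ s then 1 else 0) ∈ S)
    (hne : s.Nonempty) (hcard : 2 < sᶜ.card) : ¬ IsIReversible S := by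
  obtain ⟨m, hm⟩ := hne
  obtain ⟨p, hp, q, hq, r, hr, hpq, hqr⟩ := Finset.exists_lt_lt_of_two_lt_card hcard
  rw [mem_compl] at hp hq hr
  let e : S := ⟨_, hs⟩
  let x : S := ⟨_, hD (single_mem_constDiagRing hqr (1 : R))⟩
  let y : S := ⟨_, hD (single_mem_constDiagRing hpq (1 : R))⟩
  refine not_isIReversible_of_orthogonal (e := e) (x := x) (y := y) ?_ ?_ ?_ ?_ ?_ ?_ ?_ ?_ <;>
    simp only [IsIdempotentElem, ne_eq, ← Subtype.val_inj, Subring.coe_mul,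
      ZeroMemClass.coe_zero, e, x, y]
  · simp [diagonal_mul_diagonal]
  · intro h
    simpa [hm] using congrFun (congrFun h m) m
  · simp [diagonal_mul_single, hq]
  · simp [single_mul_diagonal, hr]
  · simp [diagonal_mul_single, hp]
  · simp [single_mul_diagonal, hq]
  · simp [(hpq.trans hqr).ne']
  · intro h
    simpa using congrFun (congrFun h p) r

theorem not_isIReversible_of_diagonal_indicator_mem {R : Type*} [Ring R] [Nontrivial R]
    (hn : 5 ≤ n) {S : Subring (Matrix (Fin n) (Fin n) R)} (hD : constDiagRing n R ≤ S)
    {s : Finset (Fin n)} (hs : diagonal (fun i => if i ∈ s then 1 else 0) ∈ S)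
    (hne : s.Nonempty) (hne' : sᶜ.Nonempty) : ¬ IsIReversible S := by
  have hcard : s.card + sᶜ.card = n := by simp
  rcases lt_or_ge 2 sᶜ.card with h | h
  · exact not_isIReversible_of_diagonal_indicator_mem_of_two_lt_card hD hs hne h
  · have hs' : diagonal (fun i => if i ∈ sᶜ then 1 else 0) ∈ S := by
      convert S.sub_mem S.one_mem hs using 1
      ext i j
      rcases eq_or_ne i j with rfl | hij
      · by_cases hi : i ∈ s <;> simp [hi]
      · simp [hij]
    exact not_isIReversible_of_diagonal_indicator_mem_of_two_lt_card hD hs' hne'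
      (by rw [compl_compl]; omega)

end Extension

/-- For a field `F` and `n ≥ 5`, `D_n(F)` is a maximal i-reversible subring of `T_n(F)`:
it is i-reversible and every subring of `T_n(F)` strictly containing it fails to be
i-reversible. -/
theorem constDiagRing_maximal_isIReversible (F : Type*) [Field F] (n : ℕ) (hn : 5 ≤ n) :
    IsIReversible (constDiagRing n F) ∧
      ∀ S : Subring (Matrix (Fin n) (Fin n) F), S ≤ triangularRing n F →
        constDiagRing n F < S → ¬ IsIReversible S := by
  classical
  refine ⟨constDiagRing_isIReversible, fun S hST hDS => ?_⟩
  obtain ⟨A, hAS, hAD⟩ := SetLike.exists_of_lt hDS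
  obtain ⟨i, j, hij⟩ : ∃ i j, A i i ≠ A j j := by
    by_contra! h
    exact hAD ⟨hST hAS, h⟩
  set s := univ.filter fun k => A k k = A j j
  have hs : diagonal (fun k => if k ∈ s then 1 else 0) ∈ S := by
    simpa [s] using diagonal_ite_diag_eq_mem hDS.le hAS (hST hAS) (A j j)
  exact not_isIReversible_of_diagonal_indicator_mem hn hDS.le hs ⟨j, by simp [s]⟩
    ⟨i, by simp [s, hij]⟩
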